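/- (Scaling in E_σ^s, dilation μ < 1) Let s ≤ 0, σ ∈ ℝ, φ ∈ E_σ^s(ℝ^d), 0 < μ < 1, and φ_μ(x) = φ(μx). Then ‖φ_μ‖_{E_σ^{s/μ}} ≤ C μ^{−d/2+σ} ‖φ‖_{E_σ^s} when σ ≤ 0, and ‖φ_μ‖_{E_σ^{s/μ}} ≤ C μ^{−d/2} ‖φ‖_{E_σ^s} when σ > 0. -/

import Mathlib

/-!
The Fourier transform of `φ (μ • ·)` is `μ ^ (-d) • φ̂ (μ⁻¹ • ·)`. Substituting `ξ = μ • η`, the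
`E_σ^{s/μ}` weight at `ξ` becomes `⟨μ η⟩^σ 2^{s |η|}`, and the Jacobian of the `L²` change of
variables leaves the factor `μ ^ (-d/2)`. It remains to compare `⟨μ η⟩^σ` with `⟨η⟩^σ`:
`⟨μ η⟩ ≥ μ ⟨η⟩` gives the factor `μ ^ σ` when `σ ≤ 0`, and `⟨μ η⟩ ≤ ⟨η⟩` gives `1` when `σ > 0`,
so `C = 1` works.
-/

open MeasureTheory FourierTransform ENNReal

noncomputable section

abbrev Vd (d : ℕ) := EuclideanSpace ℝ (Fin d)

def l1 {d : ℕ} (ξ : Vd d) : ℝ := ∑ i, |ξ i|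

def jap {d : ℕ} (ξ : Vd d) : ℝ := Real.sqrt (1 + ‖ξ‖ ^ 2)

/-- The E_σ^s norm: ‖⟨ξ⟩^σ 2^{s|ξ|} f̂(ξ)‖_{L²}. -/
def Enorm (d : ℕ) (s σ : ℝ) (f : Vd d → ℂ) : ℝ≥0∞ :=
  eLpNorm (fun ξ => ((jap ξ ^ σ * (2 : ℝ) ^ (s * l1 ξ) : ℝ) : ℂ) * 𝓕 f ξ) 2 volume

open scoped RealInnerProductSpace

theorem Real.fourier_comp_smul {V E : Type*} [NormedAddCommGroup V] [InnerProductSpace ℝ V]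
    [MeasurableSpace V] [BorelSpace V] [FiniteDimensional ℝ V]
    [NormedAddCommGroup E] [NormedSpace ℂ E] (f : V → E) {c : ℝ} (hc : c ≠ 0) (ξ : V) :
    𝓕 (fun x => f (c • x)) ξ = |(c ^ Module.finrank ℝ V)⁻¹| • 𝓕 f (c⁻¹ • ξ) := by
  have hphase : ∀ x : V, ⟪x, ξ⟫ = ⟪c • x, c⁻¹ • ξ⟫ := fun x => by
    rw [real_inner_smul_left, real_inner_smul_right, mul_inv_cancel_left₀ hc]
  simp_rw [Real.fourier_eq, hphase]
  exact Measure.integral_comp_smul volume (fun v => 𝐞 (-⟪v, c⁻¹ • ξ⟫) • f v) c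

theorem MeasureTheory.eLpNorm_comp_smul {E F : Type*} [NormedAddCommGroup E] [NormedSpace ℝ E]
    [MeasurableSpace E] [BorelSpace E] [FiniteDimensional ℝ E] (μ : Measure E)
    [μ.IsAddHaarMeasure] [NormedAddCommGroup F] (f : E → F) {c : ℝ} (hc : c ≠ 0)
    (p : ℝ≥0∞) :
    eLpNorm (fun x => f (c • x)) p μ =
      ENNReal.ofReal |(c ^ Module.finrank ℝ E)⁻¹| ^ (1 / p).toReal * eLpNorm f p μ := by
  rw [← smul_eq_mul, ← eLpNorm_smul_measure_of_ne_zero (by simp [hc]),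
    ← Measure.map_addHaar_smul μ hc]
  exact ((Homeomorph.smulOfNeZero c hc).measurableEmbedding.eLpNorm_map_measure).symm

section Weights

variable {d : ℕ}

lemma jap_pos (ξ : Vd d) : 0 < jap ξ :=
  Real.sqrt_pos.2 (by positivity)

lemma l1_smul (c : ℝ) (ξ : Vd d) : l1 (c • ξ) = |c| * l1 ξ := by
  simp [l1, Finset.mul_sum, abs_mul]

lemma mul_jap_le_jap_smul {μ : ℝ} (hμ : 0 ≤ μ) (hμ1 : μ ≤ 1) (ξ : Vd d) :
    μ * jap ξ ≤ jap (μ • ξ) := by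
  rw [jap, jap, norm_smul, Real.norm_of_nonneg hμ, Real.le_sqrt (by positivity) (by positivity),
    mul_pow, Real.sq_sqrt (by positivity)]
  nlinarith [sq_nonneg ‖ξ‖, sq_nonneg μ]

lemma jap_smul_le {μ : ℝ} (hμ : |μ| ≤ 1) (ξ : Vd d) : jap (μ • ξ) ≤ jap ξ := by
  rw [jap, jap, norm_smul, Real.norm_eq_abs]
  apply Real.sqrt_le_sqrt
  have : |μ| ^ 2 ≤ 1 := pow_le_one₀ (abs_nonneg μ) hμ
  nlinarith [sq_nonneg ‖ξ‖]

lemma jap_smul_rpow_le_of_nonpos {μ σ : ℝ} (hμ : 0 < μ) (hμ1 : μ ≤ 1) (hσ : σ ≤ 0)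
    (ξ : Vd d) : jap (μ • ξ) ^ σ ≤ μ ^ σ * jap ξ ^ σ := by
  rw [← Real.mul_rpow hμ.le (jap_pos ξ).le]
  exact Real.rpow_le_rpow_of_nonpos (mul_pos hμ (jap_pos ξ)) (mul_jap_le_jap_smul hμ.le hμ1 ξ) hσ

lemma jap_smul_rpow_le_of_nonneg {μ σ : ℝ} (hμ : |μ| ≤ 1) (hσ : 0 ≤ σ) (ξ : Vd d) :
    jap (μ • ξ) ^ σ ≤ jap ξ ^ σ :=
  Real.rpow_le_rpow (jap_pos _).le (jap_smul_le hμ ξ) hσ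

end Weights

section Dilation

variable {d : ℕ} (s σ : ℝ) (φ : Vd d → ℂ) {μ : ℝ}

lemma Enorm_comp_smul_eq (hμ : 0 < μ) :
    Enorm d (s / μ) σ (fun x => φ (μ • x)) = ENNReal.ofReal (μ ^ (-(d : ℝ) / 2)) *
      eLpNorm (fun ξ => ((jap (μ • ξ) ^ σ * (2 : ℝ) ^ (s * l1 ξ) : ℝ) : ℂ) * 𝓕 φ ξ) 2 volume := by
  set G : Vd d → ℂ := fun ξ => ((jap (μ • ξ) ^ σ * (2 : ℝ) ^ (s * l1 ξ) : ℝ) : ℂ) * 𝓕 φ ξ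
  have hG : (fun ξ => ((jap ξ ^ σ * (2 : ℝ) ^ (s / μ * l1 ξ) : ℝ) : ℂ) * 𝓕 (fun x => φ (μ • x)) ξ)
      = fun ξ => ((μ ^ d)⁻¹ • G) (μ⁻¹ • ξ) := by
    ext ξ
    rw [Real.fourier_comp_smul φ hμ.ne', finrank_euclideanSpace_fin, abs_of_pos (by positivity)]
    simp only [G, Pi.smul_apply, smul_smul, mul_inv_cancel₀ hμ.ne', one_smul, l1_smul, abs_inv,
      abs_of_pos hμ, Complex.real_smul]
    ring_nf
  rw [Enorm, hG, eLpNorm_comp_smul volume ((μ ^ d)⁻¹ • G) (inv_ne_zero hμ.ne'),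
    eLpNorm_const_smul, ← mul_assoc]
  congr 1
  rw [finrank_euclideanSpace_fin, inv_pow, inv_inv, abs_of_pos (by positivity),
    Real.enorm_eq_ofReal (by positivity), ENNReal.ofReal_rpow_of_nonneg (by positivity)
    (by positivity), ← ENNReal.ofReal_mul (by positivity), ← Real.rpow_natCast,
    ← Real.rpow_mul hμ.le, ← Real.rpow_neg hμ.le, ← Real.rpow_add hμ]
  congr 2
  norm_num
  ring

lemma Enorm_comp_smul_le (hμ : 0 < μ) {A : ℝ} (hA : 0 ≤ A)
    (hweight : ∀ ξ : Vd d, jap (μ • ξ) ^ σ ≤ A * jap ξ ^ σ) :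
    Enorm d (s / μ) σ (fun x => φ (μ • x)) ≤
      ENNReal.ofReal (μ ^ (-(d : ℝ) / 2) * A) * Enorm d s σ φ := by
  rw [Enorm_comp_smul_eq s σ φ hμ, ENNReal.ofReal_mul (by positivity), mul_assoc]
  gcongr
  rw [← Real.enorm_eq_ofReal hA, Enorm, ← eLpNorm_const_smul]
  refine eLpNorm_mono fun ξ => ?_
  simp only [Pi.smul_apply, norm_smul, norm_mul, Complex.norm_real, Real.norm_of_nonneg hA]
  rw [Real.norm_of_nonneg (Real.rpow_nonneg (jap_pos (μ • ξ)).le σ),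
    Real.norm_of_nonneg (Real.rpow_nonneg (jap_pos ξ).le σ),
    Real.norm_of_nonneg (Real.rpow_nonneg zero_le_two _)]
  calc jap (μ • ξ) ^ σ * 2 ^ (s * l1 ξ) * ‖𝓕 φ ξ‖
      ≤ A * jap ξ ^ σ * 2 ^ (s * l1 ξ) * ‖𝓕 φ ξ‖ := by gcongr; exact hweight ξ
    _ = A * (jap ξ ^ σ * 2 ^ (s * l1 ξ) * ‖𝓕 φ ξ‖) := by ring

end Dilation

theorem stmt11_general (d : ℕ) (s σ : ℝ) :
    ∃ C : ℝ, 0 < C ∧ ∀ φ : Vd d → ℂ, ∀ μ : ℝ, 0 < μ → μ < 1 →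
      (σ ≤ 0 → Enorm d (s/μ) σ (fun x => φ (μ • x)) ≤
        ENNReal.ofReal (C * μ ^ (-(d : ℝ)/2 + σ)) * Enorm d s σ φ) ∧
      (0 < σ → Enorm d (s/μ) σ (fun x => φ (μ • x)) ≤
        ENNReal.ofReal (C * μ ^ (-(d : ℝ)/2)) * Enorm d s σ φ) := by
  refine ⟨1, one_pos, fun φ μ hμ hμ1 => ⟨fun hσ => ?_, fun hσ => ?_⟩⟩
  · rw [one_mul, Real.rpow_add hμ]
    exact Enorm_comp_smul_le s σ φ hμ (by positivity)
      (jap_smul_rpow_le_of_nonpos hμ hμ1.le hσ)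
  · rw [one_mul, ← mul_one (μ ^ _)]
    refine Enorm_comp_smul_le s σ φ hμ zero_le_one fun ξ => ?_
    rw [one_mul]
    exact jap_smul_rpow_le_of_nonneg ((abs_of_pos hμ).trans_le hμ1.le) hσ.le ξ

/-- scaling in E_σ^s for dilations 0 < μ < 1: for s ≤ 0,
‖φ(μ·)‖_{E_σ^{s/μ}} ≤ C μ^{−d/2+σ} ‖φ‖_{E_σ^s} when σ ≤ 0, and
‖φ(μ·)‖_{E_σ^{s/μ}} ≤ C μ^{−d/2} ‖φ‖_{E_σ^s} when σ > 0. -/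
theorem stmt11 (d : ℕ) (s σ : ℝ) (hs : s ≤ 0) :
    ∃ C : ℝ, 0 < C ∧ ∀ φ : Vd d → ℂ, ∀ μ : ℝ, 0 < μ → μ < 1 →
      (σ ≤ 0 → Enorm d (s/μ) σ (fun x => φ (μ • x)) ≤
        ENNReal.ofReal (C * μ ^ (-(d : ℝ)/2 + σ)) * Enorm d s σ φ) ∧
      (0 < σ → Enorm d (s/μ) σ (fun x => φ (μ • x)) ≤
        ENNReal.ofReal (C * μ ^ (-(d : ℝ)/2)) * Enorm d s σ φ) :=
  stmt11_general d s σ
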